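/- Let φ:[0,T]→[0,∞) be a bounded Borel measurable function and suppose there exist constants a, α, β ≥ 0 such that for all t ∈ [0,T], φ(t)² ≤ a + 2α∫₀ᵗ φ(s) ds + 2β∫₀ᵗ φ(s)² ds. Then for all t ∈ [0,T], φ(t) ≤ √a · e^{βt} + α·(e^{βt} − 1)/β. -/

import Mathlib

/-!
Compare `φ` with `v = gronwallBound δ β α`, the solution of `v' = β v + α`, `v 0 = δ`, for
`δ > √a`. Squaring the ODE shows that `v` turns the integral inequality into an equality with
`δ²` in place of `a`. Hence at the first time where `v² ≤ a + 2α∫φ + 2β∫φ²`, we would have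
`φ < v` on the interval before it, so the right-hand side is at most `v² - (δ² - a) < v²`:
there is no such time, and `φ < v` throughout. Finally let `δ` decrease to `√a`.
-/

open MeasureTheory Real Set

/-- Continuous induction: the first point where positivity fails is the infimum of a closed set. -/
theorem ContinuousOn.pos_of_forall_Ico_pos {G : ℝ → ℝ} {a b : ℝ} (hG : ContinuousOn G (Icc a b))
    (hstep : ∀ t ∈ Icc a b, (∀ s ∈ Ico a t, 0 < G s) → 0 < G t) :
    ∀ t ∈ Icc a b, 0 < G t := by
  by_contra! hfail
  set S := Icc a b ∩ G ⁻¹' Iic 0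
  have hS : IsClosed S := hG.preimage_isClosed_of_isClosed isClosed_Icc isClosed_Iic
  have hS_bdd : BddBelow S := ⟨a, fun x hx => hx.1.1⟩
  have hinf : sInf S ∈ S := hS.csInf_mem hfail hS_bdd
  refine (hstep _ hinf.1 fun s hs => ?_).not_ge hinf.2
  by_contra! hGs
  exact notMem_of_lt_csInf hs.2 hS_bdd ⟨⟨hs.1, hs.2.le.trans hinf.1.2⟩, hGs⟩

theorem intervalIntegrable_of_norm_le {E : Type*} [NormedAddCommGroup E] {f : ℝ → E}
    {a b M : ℝ} (hf : AEStronglyMeasurable f) (hM : ∀ t ∈ uIcc a b, ‖f t‖ ≤ M) :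
    IntervalIntegrable f volume a b :=
  intervalIntegrable_const.mono_fun' hf.restrict <|
    (ae_restrict_iff' measurableSet_uIoc).2 <| ae_of_all _ fun t ht => hM t (uIoc_subset_uIcc ht)

theorem continuous_gronwallBound (δ K ε : ℝ) : Continuous (gronwallBound δ K ε) :=
  continuous_iff_continuousAt.2 fun x => (hasDerivAt_gronwallBound δ K ε x).continuousAt

theorem sq_gronwallBound (δ K ε t : ℝ) :
    gronwallBound δ K ε t ^ 2 = δ ^ 2 + 2 * ε * (∫ s in (0:ℝ)..t, gronwallBound δ K ε s)
      + 2 * K * ∫ s in (0:ℝ)..t, gronwallBound δ K ε s ^ 2 := by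
  set v := gronwallBound δ K ε
  have hv : Continuous v := continuous_gronwallBound δ K ε
  have hderiv : ∀ s ∈ uIcc 0 t, HasDerivAt (fun u => v u ^ 2)
      (2 * ε * v s + 2 * K * v s ^ 2) s := fun s _ =>
    ((hasDerivAt_gronwallBound δ K ε s).pow 2).congr_deriv (by ring)
  have hftc := intervalIntegral.integral_eq_sub_of_hasDerivAt hderiv
    (Continuous.intervalIntegrable (by fun_prop) _ _)
  rw [intervalIntegral.integral_add (Continuous.intervalIntegrable (by fun_prop) _ _)
    (Continuous.intervalIntegrable (by fun_prop) _ _), intervalIntegral.integral_const_mul,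
    intervalIntegral.integral_const_mul, show v 0 = δ from gronwallBound_x0 δ K ε] at hftc
  linarith

theorem lt_gronwallBound_of_sq_le {φ : ℝ → ℝ} {T a α β δ : ℝ}
    (hφ : IntervalIntegrable φ volume 0 T)
    (hφ_sq : IntervalIntegrable (fun s => φ s ^ 2) volume 0 T)
    (hα : 0 ≤ α) (hβ : 0 ≤ β) (hδ : 0 ≤ δ) (haδ : a < δ ^ 2)
    (hineq : ∀ t ∈ Icc 0 T,
      φ t ^ 2 ≤ a + 2 * α * (∫ s in (0:ℝ)..t, φ s) + 2 * β * (∫ s in (0:ℝ)..t, φ s ^ 2)) :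
    ∀ t ∈ Icc 0 T, φ t < gronwallBound δ β α t := by
  set v := gronwallBound δ β α
  set A := fun t => a + 2 * α * (∫ s in (0:ℝ)..t, φ s) + 2 * β * (∫ s in (0:ℝ)..t, φ s ^ 2)
  have hv : Continuous v := continuous_gronwallBound δ β α
  have hv_nonneg : ∀ t, 0 ≤ t → 0 ≤ v t := fun t ht =>
    (gronwallBound_x0 δ β α ▸ hδ).trans (gronwallBound_mono hδ hα hβ ht)
  have hA : ContinuousOn A (Icc 0 T) := by
    have h0 : (0:ℝ) ∈ uIcc 0 T := left_mem_uIcc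
    have hprim := intervalIntegral.continuousOn_primitive_interval' hφ h0
    have hprim_sq := intervalIntegral.continuousOn_primitive_interval' hφ_sq h0
    exact ((hprim.mono Icc_subset_uIcc).const_smul (2 * α)).const_add a |>.add <|
      (hprim_sq.mono Icc_subset_uIcc).const_smul (2 * β)
  have hsub : ∀ t ∈ Icc 0 T, uIcc 0 t ⊆ uIcc 0 T := fun t ht =>
    uIcc_subset_uIcc_left (Icc_subset_uIcc ht)
  have hgap : ∀ t ∈ Icc 0 T, 0 < v t ^ 2 - A t := by
    refine ((hv.pow 2).continuousOn.sub hA).pos_of_forall_Ico_pos fun t ht hpos => ?_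
    have hsq : ∀ s ∈ Ioo 0 t, φ s ^ 2 < v s ^ 2 := fun s hs => by
      have hgap_s := hpos s ⟨hs.1.le, hs.2⟩
      simp only [Pi.sub_apply, Pi.pow_apply] at hgap_s
      linarith [hineq s ⟨hs.1.le, hs.2.le.trans ht.2⟩]
    have hint : (∫ s in (0:ℝ)..t, φ s) ≤ ∫ s in (0:ℝ)..t, v s :=
      intervalIntegral.integral_mono_on_of_le_Ioo ht.1 (hφ.mono_set (hsub t ht))
        (hv.intervalIntegrable 0 t) fun s hs =>
          (lt_of_pow_lt_pow_left₀ 2 (hv_nonneg s hs.1.le) (hsq s hs)).le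
    have hint_sq : (∫ s in (0:ℝ)..t, φ s ^ 2) ≤ ∫ s in (0:ℝ)..t, v s ^ 2 :=
      intervalIntegral.integral_mono_on_of_le_Ioo ht.1 (hφ_sq.mono_set (hsub t ht))
        ((hv.pow 2).intervalIntegrable 0 t) fun s hs => (hsq s hs).le
    simp only [Pi.sub_apply, Pi.pow_apply, A]
    linarith [sq_gronwallBound δ β α t,
      mul_le_mul_of_nonneg_left hint (by positivity : (0:ℝ) ≤ 2 * α),
      mul_le_mul_of_nonneg_left hint_sq (by positivity : (0:ℝ) ≤ 2 * β)]
  refine fun t ht => lt_of_pow_lt_pow_left₀ 2 (hv_nonneg t ht.1) ?_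
  linarith [hineq t ht, hgap t ht]

theorem stmt_0_general (T : ℝ) (hT : 0 < T) (φ : ℝ → ℝ)
    (hφ_meas : Measurable φ)
    (hφ_nonneg : ∀ t ∈ Set.Icc 0 T, 0 ≤ φ t)
    (hφ_bdd : ∃ M, ∀ t ∈ Set.Icc 0 T, φ t ≤ M)
    (a α β : ℝ) (hα : 0 ≤ α) (hβ : 0 < β)
    (hineq : ∀ t ∈ Set.Icc 0 T,
      φ t ^ 2 ≤ a + 2 * α * (∫ s in (0:ℝ)..t, φ s) + 2 * β * (∫ s in (0:ℝ)..t, φ s ^ 2)) :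
    ∀ t ∈ Set.Icc 0 T,
      φ t ≤ Real.sqrt a * Real.exp (β * t) + α * (Real.exp (β * t) - 1) / β := by
  obtain ⟨M, hM⟩ := hφ_bdd
  have hnorm_le : ∀ t ∈ uIcc 0 T, ‖φ t‖ ≤ M := fun t ht => by
    rw [uIcc_of_le hT.le] at ht
    rw [norm_of_nonneg (hφ_nonneg t ht)]
    exact hM t ht
  have hφ_int : IntervalIntegrable φ volume 0 T :=
    intervalIntegrable_of_norm_le hφ_meas.aestronglyMeasurable hnorm_le
  have hφ_sq_int : IntervalIntegrable (fun s => φ s ^ 2) volume 0 T :=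
    intervalIntegrable_of_norm_le (hφ_meas.pow_const 2).aestronglyMeasurable (M := M ^ 2)
      fun t ht => by
        simpa only [norm_pow] using pow_le_pow_left₀ (norm_nonneg _) (hnorm_le t ht) 2
  intro t ht
  have hcmp : ∀ δ ∈ Ioi (√a), φ t ≤ gronwallBound δ β α t := fun δ hδ =>
    (lt_gronwallBound_of_sq_le hφ_int hφ_sq_int hα hβ.le ((sqrt_nonneg a).trans hδ.le)
      (lt_sq_of_sqrt_lt hδ) hineq t ht).le
  have hcont : Continuous fun δ => gronwallBound δ β α t := by
    simp only [gronwallBound_of_K_ne_0 hβ.ne']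
    fun_prop
  have hlim := ge_of_tendsto (hcont.continuousWithinAt (s := Ioi (√a)) (x := √a))
    (eventually_nhdsWithin_of_forall hcmp)
  simp only [gronwallBound_of_K_ne_0 hβ.ne'] at hlim
  rwa [div_mul_eq_mul_div] at hlim

/-- Gronwall's lemma with quadratic term. -/
theorem stmt_0 (T : ℝ) (hT : 0 < T) (φ : ℝ → ℝ)
    (hφ_meas : Measurable φ)
    (hφ_nonneg : ∀ t ∈ Set.Icc 0 T, 0 ≤ φ t)
    (hφ_bdd : ∃ M, ∀ t ∈ Set.Icc 0 T, φ t ≤ M)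
    (a α β : ℝ) (ha : 0 ≤ a) (hα : 0 ≤ α) (hβ : 0 < β)
    (hineq : ∀ t ∈ Set.Icc 0 T,
      φ t ^ 2 ≤ a + 2 * α * (∫ s in (0:ℝ)..t, φ s) + 2 * β * (∫ s in (0:ℝ)..t, φ s ^ 2)) :
    ∀ t ∈ Set.Icc 0 T,
      φ t ≤ Real.sqrt a * Real.exp (β * t) + α * (Real.exp (β * t) - 1) / β :=
  stmt_0_general T hT φ hφ_meas hφ_nonneg hφ_bdd a α β hα hβ hineq
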